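/- arXiv:1807.01004 — 2 statements merged into one kernel-verified Lean document; each statement's English description precedes it below -/
import Mathlib

section
/- First violating-trace-semantics condition for SHML: for every closed formula φ ∈ SHML, every system p and every trace t ∈ Act*, if p ⊨v^t φ then p does not satisfy φ (p ∉ ⟦φ⟧) and p can weakly perform the trace t (there exists p' with p =t=> p'). -/
set_option autoImplicit false

/-- A labelled transition system over observable actions `Act`;
`none` plays the role of the silent action τ. -/
structure LTS (Act : Type) where
  S : Type
  Tr : S → Option Act → S → Prop

namespace Enf

open scoped Classical

variable {Act : Type}

/-- Zero or more silent steps. -/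
def TauStar (L : LTS Act) : L.S → L.S → Prop :=
  Relation.ReflTransGen (fun p q => L.Tr p none q)

/-- The weak transition `p =a=> q`. -/
def WStep (L : LTS Act) (p : L.S) (a : Act) (q : L.S) : Prop :=
  ∃ p₁ p₂, TauStar L p p₁ ∧ L.Tr p₁ (some a) p₂ ∧ TauStar L p₂ q

/-- Weak trace `p =t=> q`. -/
inductive WTrace (L : LTS Act) : L.S → List Act → L.S → Prop
  | nil {p q : L.S} : TauStar L p q → WTrace L p [] q
  | cons {p r q : L.S} {a : Act} {t : List Act} :
      WStep L p a r → WTrace L r t q → WTrace L p (a :: t) q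

/-- SHML formulas: truth, falsehood, fixpoint variables, finite conjunctions,
modalities `[η]φ` (a guard set of actions together with an action-indexed
continuation, representing the symbolic action and the matching substitutions),
and greatest fixpoints. -/
inductive Frm (Act : Type) : Type where
  | tt : Frm Act
  | ff : Frm Act
  | var : ℕ → Frm Act
  | conj : (n : ℕ) → (Fin n → Frm Act) → Frm Act
  | box : Set Act → (Act → Frm Act) → Frm Act
  | max : ℕ → Frm Act → Frm Act

namespace Frm

/-- Free fixpoint variables. -/
def fv : Frm Act → Set ℕ
  | .tt => ∅
  | .ff => ∅
  | .var X => {X}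
  | .conj _ f => ⋃ i, fv (f i)
  | .box G k => ⋃ a ∈ G, fv (k a)
  | .max X φ => fv φ \ {X}

def Closed (φ : Frm Act) : Prop := fv φ = ∅

/-- Substitution `φ[ψ/X]` (of a closed formula `ψ`). -/
def subst : Frm Act → ℕ → Frm Act → Frm Act
  | .tt, _, _ => .tt
  | .ff, _, _ => .ff
  | .var Y, X, ψ => if Y = X then ψ else .var Y
  | .conj n f, X, ψ => .conj n (fun i => subst (f i) X ψ)
  | .box G k, X, ψ => .box G (fun a => subst (k a) X ψ)
  | .max Y φ, X, ψ => if Y = X then .max Y φ else .max Y (subst φ X ψ)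

/-- The normal-form fragment SHMLnf: conjunctions are conjunctions of
modalities with pairwise-disjoint guards, and each greatest fixpoint binds a
variable occurring free in its body. -/
inductive IsNF : Frm Act → Prop
  | tt : IsNF .tt
  | ff : IsNF .ff
  | var (X : ℕ) : IsNF (.var X)
  | conj (n : ℕ) (G : Fin n → Set Act) (k : Fin n → Act → Frm Act)
      (hdisj : ∀ i j : Fin n, i ≠ j → ∀ a : Act, a ∈ G i → a ∉ G j)
      (hk : ∀ i : Fin n, ∀ a ∈ G i, IsNF (k i a)) :
      IsNF (.conj n fun i => .box (G i) (k i))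
  | max (X : ℕ) (φ : Frm Act) (hfree : X ∈ fv φ) (hφ : IsNF φ) : IsNF (.max X φ)

/-- `gvar X φ`: the variable `X` does not occur unguarded (i.e. outside every
modality) in `φ`. -/
def gvar (X : ℕ) : Frm Act → Prop
  | .tt => True
  | .ff => True
  | .var Y => Y ≠ X
  | .conj _ f => ∀ i, gvar X (f i)
  | .box _ _ => True
  | .max Y φ => Y = X ∨ gvar X φ

/-- A formula is guarded if every occurrence of a fixpoint variable lies
beneath a modality. -/
def Guarded : Frm Act → Prop
  | .tt => True
  | .ff => True
  | .var _ => True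
  | .conj _ f => ∀ i, Guarded (f i)
  | .box G k => ∀ a ∈ G, Guarded (k a)
  | .max X φ => gvar X φ ∧ Guarded φ

/-- Number of top-level greatest-fixpoint binders. -/
def topMax : Frm Act → ℕ
  | .max _ φ => topMax φ + 1
  | _ => 0

end Frm

/-- Denotational semantics of (possibly open) formulas, relative to an
environment mapping fixpoint variables to sets of states; `max` is interpreted
as the greatest fixpoint of the induced monotone map. -/
def sem (L : LTS Act) : Frm Act → (ℕ → Set L.S) → Set L.S
  | .tt, _ => Set.univ
  | .ff, _ => ∅
  | .var X, ρ => ρ X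
  | .conj _ f, ρ => ⋂ i, sem L (f i) ρ
  | .box G k, ρ => {p | ∀ a ∈ G, ∀ q, WStep L p a q → q ∈ sem L (k a) ρ}
  | .max X φ, ρ => ⋃₀ {S | S ⊆ sem L φ (Function.update ρ X S)}

/-- Semantics of closed formulas. -/
def Sem (L : LTS Act) (φ : Frm Act) : Set L.S := sem L φ fun _ => ∅

/-- Satisfiability. -/
def SatIn (L : LTS Act) (φ : Frm Act) : Prop := (Sem L φ).Nonempty

/-- The violation relation `p ⊨v^t φ`, defined as the least relation closed
under the given rules. -/
inductive Viol (L : LTS Act) : L.S → List Act → Frm Act → Prop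
  | ff (p : L.S) : Viol L p [] .ff
  | conj {p : L.S} {t : List Act} {n : ℕ} {f : Fin n → Frm Act} (j : Fin n) :
      Viol L p t (f j) → Viol L p t (.conj n f)
  | box {p p' : L.S} {t : List Act} {a : Act} {G : Set Act} {k : Act → Frm Act} :
      a ∈ G → WStep L p a p' → Viol L p' t (k a) → Viol L p (a :: t) (.box G k)
  | max {p : L.S} {t : List Act} {X : ℕ} {φ : Frm Act} :
      Viol L p t (Frm.subst φ X (.max X φ)) → Viol L p t (.max X φ)

/-- Transducers (enforcement monitors): identity, symbolic transformation
prefixes (a guard set of extended input actions, with `none` standing for the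
insertion pattern •, an output per matched input, with `none` standing for τ,
and a continuation per matched input), finite selections, recursion, and
recursion variables. -/
inductive Trn (Act : Type) : Type where
  | id : Trn Act
  | prf : Set (Option Act) → (Option Act → Option Act) → (Option Act → Trn Act) → Trn Act
  | sel : (n : ℕ) → (Fin n → Trn Act) → Trn Act
  | fix : ℕ → Trn Act → Trn Act
  | var : ℕ → Trn Act

namespace Trn

def tsubst : Trn Act → ℕ → Trn Act → Trn Act
  | .id, _, _ => .id
  | .prf G out k, x, s => .prf G out fun γ => tsubst (k γ) x s
  | .sel n f, x, s => .sel n fun i => tsubst (f i) x s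
  | .fix y e, x, s => if y = x then .fix y e else .fix y (tsubst e x s)
  | .var y, x, s => if y = x then s else .var y

end Trn

/-- Transducer transitions: labels are pairs (input, output) where input
`none` is the insertion pattern • and output `none` is τ. -/
inductive TStep : Trn Act → Option Act × Option Act → Trn Act → Prop
  | id (a : Act) : TStep .id (some a, some a) .id
  | prf {G : Set (Option Act)} {out : Option Act → Option Act}
      {k : Option Act → Trn Act} {γ : Option Act} (h : γ ∈ G) :
      TStep (.prf G out k) (γ, out γ) (k γ)
  | sel {n : ℕ} {f : Fin n → Trn Act} {l : Option Act × Option Act}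
      {e' : Trn Act} (i : Fin n) (h : TStep (f i) l e') :
      TStep (.sel n f) l e'
  | fix {x : ℕ} {e : Trn Act} {l : Option Act × Option Act} {e' : Trn Act}
      (h : TStep (Trn.tsubst e x (.fix x e)) l e') :
      TStep (.fix x e) l e'

/-- Instrumentation of a transducer on a system. -/
inductive IStep (L : LTS Act) : Trn Act × L.S → Option Act → Trn Act × L.S → Prop
  | trn {e e' : Trn Act} {p p' : L.S} {a : Act} {μ : Option Act} :
      L.Tr p (some a) p' → TStep e (some a, μ) e' → IStep L (e, p) μ (e', p')
  | asy {e : Trn Act} {p p' : L.S} :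
      L.Tr p none p' → IStep L (e, p) none (e, p')
  | ins {e e' : Trn Act} {p : L.S} {μ : Option Act} :
      TStep e (none, μ) e' → IStep L (e, p) μ (e', p)
  | ter {e : Trn Act} {p p' : L.S} {a : Act} :
      L.Tr p (some a) p' →
      (∀ μ e', ¬ TStep e (some a, μ) e') →
      (∀ μ e', ¬ TStep e (none, μ) e') →
      IStep L (e, p) (some a) (Trn.id, p')

/-- The LTS of monitored systems `e[p]`. -/
def instLTS (L : LTS Act) : LTS Act := ⟨Trn Act × L.S, IStep L⟩

/-- Strong bisimulations between (the state spaces of) two LTSs. -/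
def IsBisim (L₁ L₂ : LTS Act) (R : L₁.S → L₂.S → Prop) : Prop :=
  ∀ s r, R s r →
    (∀ μ s', L₁.Tr s μ s' → ∃ r', L₂.Tr r μ r' ∧ R s' r') ∧
    (∀ μ r', L₂.Tr r μ r' → ∃ s', L₁.Tr s μ s' ∧ R s' r')

/-- Strong bisimilarity. -/
def Bisim (L₁ L₂ : LTS Act) (s : L₁.S) (r : L₂.S) : Prop :=
  ∃ R, IsBisim L₁ L₂ R ∧ R s r

/-- The synthesis function `⟦-⟧e` from SHMLnf formulas to transducers:
formula variable `X` becomes monitor variable `X+1`; `tt` and `ff` become the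
identity monitor; `max X.φ` becomes the corresponding recursive monitor; and a
normalised conjunction of modalities becomes a recursive selection (on the
fresh variable `0`) of symbolic prefixes that suppress (output τ, continue as
the recursion variable) actions whose continuation formula is `ff` and pass
through all other matched actions, continuing with the synthesis of the
respective continuation formula. -/
noncomputable def synth : Frm Act → Trn Act
  | .tt => .id
  | .ff => .id
  | .var X => .var (X + 1)
  | .max X φ => .fix (X + 1) (synth φ)
  | .box G k =>
      .prf {γ | ∃ a ∈ G, γ = some a}
        (fun γ =>
          match γ with
          | some a => if k a = Frm.ff then none else some a
          | none => none)
        (fun γ =>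
          match γ with
          | some a => if k a = Frm.ff then Trn.var 0 else synth (k a)
          | none => .id)
  | .conj n f => .fix 0 (.sel n fun i => synth (f i))

/-- Fuelled residual function (the fuel is consumed by fixpoint unfoldings;
on guarded closed SHMLnf formulas `topMax φ + 1` units of fuel suffice). -/
noncomputable def afterFuel : ℕ → Frm Act → Act → Frm Act
  | 0, _, _ => .tt
  | n + 1, φ, a =>
    match φ with
    | .max X ψ => afterFuel n (Frm.subst ψ X (.max X ψ)) a
    | .conj m f =>
        if h : ∃ i : Fin m, ∃ G : Set Act, ∃ k : Act → Frm Act,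
            f i = Frm.box G k ∧ a ∈ G
        then h.choose_spec.choose_spec.choose a
        else .tt
    | ψ => ψ

/-- The residual `after(φ, a)` of a guarded closed SHMLnf formula. -/
noncomputable def after (φ : Frm Act) (a : Act) : Frm Act :=
  afterFuel (Frm.topMax φ + 1) φ a

/-- Satisfaction relations (the coinductive rules of `⊨s`). -/
def IsSatRel (L : LTS Act) (R : L.S → Frm Act → Prop) : Prop :=
  (∀ p, ¬ R p .ff) ∧
  (∀ p (n : ℕ) (f : Fin n → Frm Act), R p (.conj n f) → ∀ i, R p (f i)) ∧
  (∀ p (G : Set Act) (k : Act → Frm Act), R p (.box G k) →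
      ∀ a ∈ G, ∀ q, WStep L p a q → R q (k a)) ∧
  (∀ p (X : ℕ) (φ : Frm Act), R p (.max X φ) → R p (Frm.subst φ X (.max X φ)))

/-- The largest satisfaction relation `⊨s`. -/
def SatCo (L : LTS Act) (p : L.S) (φ : Frm Act) : Prop :=
  ∃ R, IsSatRel L R ∧ R p φ


/-!
Induction on the derivation of `p ⊨v^t φ`. The weak steps used by the modality rules assemble
into a weak trace for `t`. For non-satisfaction the only rule needing work is fixpoint unfolding:
`⟦max X.φ⟧` is a greatest fixpoint, hence a fixpoint, and substituting the closed formula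
`max X.φ` for `X` has the same meaning as binding `X` to `⟦max X.φ⟧` in the environment.
-/

namespace Frm

lemma fv_subst_subset (φ : Frm Act) (X : ℕ) {ψ : Frm Act} (hψ : ψ.Closed) :
    (φ.subst X ψ).fv ⊆ φ.fv \ {X} := by
  induction φ with
  | tt | ff => simp [subst, fv]
  | var Y =>
      by_cases hY : Y = X
      · simp [subst, hY, show ψ.fv = ∅ from hψ]
      · simp [subst, fv, hY]
  | conj n f ih =>
      simp only [subst, fv, Set.iUnion_subset_iff]
      exact fun i =>
        (ih i).trans (Set.sdiff_subset_sdiff_left (Set.subset_iUnion (fun i => (f i).fv) i))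
  | box G k ih =>
      simp only [subst, fv, Set.iUnion_subset_iff]
      exact fun a ha => (ih a).trans
        (Set.sdiff_subset_sdiff_left (Set.subset_biUnion_of_mem (u := fun a => (k a).fv) ha))
  | max Y φ ih =>
      by_cases hY : Y = X
      · subst hY
        simp [subst, fv]
      · simp only [subst, hY, if_false, fv]
        exact fun Z hZ => ⟨⟨(ih hZ.1).1, hZ.2⟩, (ih hZ.1).2⟩

lemma Closed.conj_apply {n : ℕ} {f : Fin n → Frm Act} (h : (conj n f).Closed) (i : Fin n) :
    (f i).Closed :=
  Set.subset_empty_iff.1 (h ▸ Set.subset_iUnion (fun i => (f i).fv) i)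

lemma Closed.box_apply {G : Set Act} {k : Act → Frm Act} (h : (box G k).Closed) {a : Act}
    (ha : a ∈ G) : (k a).Closed :=
  Set.subset_empty_iff.1 (h ▸ Set.subset_biUnion_of_mem (u := fun a => (k a).fv) ha)

lemma Closed.unfold {X : ℕ} {φ : Frm Act} (h : (max X φ).Closed) :
    (φ.subst X (max X φ)).Closed :=
  Set.subset_empty_iff.1 (h ▸ fv_subst_subset φ X h)

end Frm

open Function

variable (L : LTS Act)

lemma sem_congr (φ : Frm Act) {ρ ρ' : ℕ → Set L.S} (h : ∀ X ∈ φ.fv, ρ X = ρ' X) :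
    sem L φ ρ = sem L φ ρ' := by
  induction φ generalizing ρ ρ' with
  | tt | ff => rfl
  | var Y => exact h Y rfl
  | conj n f ih =>
      exact Set.iInter_congr fun i => ih i fun X hX => h X (Set.mem_iUnion_of_mem i hX)
  | box G k ih =>
      ext p
      refine forall₂_congr fun a ha => forall₂_congr fun q _ => ?_
      rw [ih a fun X hX => h X (Set.mem_biUnion ha hX)]
  | max Y φ ih =>
      refine congrArg Set.sUnion (Set.ext fun S => ?_)
      rw [Set.mem_ofPred_eq, Set.mem_ofPred_eq, ih fun X hX => ?_]
      by_cases hXY : X = Y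
      · simp [hXY]
      · simpa [hXY] using h X ⟨hX, hXY⟩

lemma sem_monotone (φ : Frm Act) : Monotone (sem L φ) := by
  induction φ with
  | tt | ff => exact monotone_const
  | var Y => exact fun ρ ρ' h => h Y
  | conj n f ih => exact fun ρ ρ' h => Set.iInter_mono fun i => ih i h
  | box G k ih => exact fun ρ ρ' h p hp a ha q hq => ih a h (hp a ha q hq)
  | max Y φ ih =>
      exact fun ρ ρ' h => Set.sUnion_mono fun S (hS : S ⊆ _) =>
        hS.trans (ih (update_le_update_iff.2 ⟨le_rfl, fun X _ => h X⟩))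

lemma sem_max_eq_gfp (X : ℕ) (φ : Frm Act) (ρ : ℕ → Set L.S) :
    sem L (.max X φ) ρ =
      OrderHom.gfp ⟨fun S => sem L φ (update ρ X S), (sem_monotone L φ).comp update_mono⟩ :=
  rfl

lemma sem_max_unfold (X : ℕ) (φ : Frm Act) (ρ : ℕ → Set L.S) :
    sem L (.max X φ) ρ = sem L φ (update ρ X (sem L (.max X φ) ρ)) := by
  rw [sem_max_eq_gfp]
  exact (OrderHom.map_gfp _).symm

lemma sem_of_closed {ψ : Frm Act} (hψ : ψ.Closed) (ρ : ℕ → Set L.S) :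
    sem L ψ ρ = Sem L ψ :=
  sem_congr L ψ fun X hX => absurd (hψ ▸ hX) (Set.notMem_empty X)

lemma sem_subst {ψ : Frm Act} (hψ : ψ.Closed) (φ : Frm Act) (X : ℕ) (ρ : ℕ → Set L.S) :
    sem L (φ.subst X ψ) ρ = sem L φ (update ρ X (Sem L ψ)) := by
  induction φ generalizing ρ with
  | tt | ff => rfl
  | var Y =>
      by_cases hY : Y = X
      · subst hY
        simp [Frm.subst, sem, sem_of_closed L hψ]
      · simp [Frm.subst, sem, hY]
  | conj n f ih => exact Set.iInter_congr fun i => ih i ρ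
  | box G k ih =>
      ext p
      refine forall₂_congr fun a ha => forall₂_congr fun q _ => ?_
      rw [ih a ρ]
  | max Y φ ih =>
      by_cases hY : Y = X
      · subst hY
        simp [Frm.subst, sem]
      · simp only [Frm.subst, hY, if_false, sem, ih, update_comm hY]

lemma Sem_max_eq_subst {X : ℕ} {φ : Frm Act} (h : (Frm.max X φ).Closed) :
    Sem L (.max X φ) = Sem L (φ.subst X (.max X φ)) :=
  (sem_max_unfold L X φ _).trans (sem_subst L h φ X _).symm

variable {L}

namespace Viol

lemma exists_wtrace {p : L.S} {t : List Act} {φ : Frm Act} (h : Viol L p t φ) :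
    ∃ p', WTrace L p t p' := by
  induction h with
  | ff p => exact ⟨p, .nil .refl⟩
  | conj _ _ ih | max _ ih => exact ih
  | box _ hstep _ ih =>
      obtain ⟨p', hp'⟩ := ih
      exact ⟨p', .cons hstep hp'⟩

lemma notMem_Sem {p : L.S} {t : List Act} {φ : Frm Act} (h : Viol L p t φ) (hφ : φ.Closed) :
    p ∉ Sem L φ := by
  induction h with
  | ff p => exact Set.notMem_empty p
  | conj j _ ih => exact fun hp => ih (hφ.conj_apply j) (Set.mem_iInter.1 hp j)
  | box ha hstep _ ih => exact fun hp => ih (hφ.box_apply ha) (hp _ ha _ hstep)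
  | max _ ih => exact (Sem_max_eq_subst L hφ).symm ▸ ih hφ.unfold

end Viol

/-- first violating-trace-semantics condition: if p ⊨v^t φ then
p ∉ ⟦φ⟧ and p can weakly perform t. -/
theorem violating_trace_cond1 (Act : Type) (L : LTS Act) (φ : Frm Act)
    (hclosed : φ.Closed) (p : L.S) (t : List Act) (hviol : Viol L p t φ) :
    p ∉ Sem L φ ∧ ∃ p' : L.S, WTrace L p t p' :=
  ⟨hviol.notMem_Sem hclosed, hviol.exists_wtrace⟩

end Enf
end

section
/- Non-violating trace transparency, forward direction: let φ ∈ SHMLnf be closed and guarded, let p be a system and t ∈ Act* a trace such that no prefix of t (including t itself) is a violating trace of p with respect to φ. If p =t=> p', then there exists a transducer e' such that ⟦φ⟧e[p] =t=> e'[p'], i.e., the instrumented system can weakly perform the same trace t, ending in a state whose underlying system component is p'. -/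
set_option autoImplicit false

namespace Enf

open scoped Classical

variable {Act : Type}

/-!
Along a weak trace of `p`, the monitor `⟦φ⟧e`, once its fixpoints are unfolded (finitely
often, since `φ` is guarded), reacts to the next action `a` in one of two ways: it either
passes `a` through and continues as the monitor of a residual formula, or it has no
transition for `a` or `•` at all, and rule (iTer) hands control to `id`, which is transparent
for the rest of the trace. The only other option, suppressing `a`, arises when the residual is
`ff`, that is, when the trace so far is violating.
-/

namespace Frm

variable {ψ : Frm Act}

theorem fv_subst (hψ : ψ.Closed) (φ : Frm Act) (X : ℕ) : (φ.subst X ψ).fv = φ.fv \ {X} := by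
  induction φ with
  | tt | ff => simp [subst, fv]
  | var Y =>
    by_cases h : Y = X
    · simpa [subst, fv, h] using show ψ.fv = ∅ from hψ
    · simp [subst, fv, h, Ne.symm h]
  | conj n f ih => simp [subst, fv, ih, Set.iUnion_sdiff]
  | box G k ih => simp [subst, fv, ih, Set.iUnion_sdiff]
  | max Y φ ih =>
    by_cases h : Y = X
    · subst h; simp [subst, fv]
    · simp [subst, fv, h, ih, Set.sdiff_sdiff_comm]

theorem gvar_of_not_mem_fv {X : ℕ} {φ : Frm Act} (h : X ∉ φ.fv) : φ.gvar X := by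
  induction φ with
  | tt | ff | box => trivial
  | var Y => simpa [fv, gvar, eq_comm] using h
  | conj n f ih => simp only [fv, Set.mem_iUnion, not_exists] at h; exact fun i => ih i (h i)
  | max Y φ ih =>
    by_cases hY : Y = X
    · exact .inl hY
    · exact .inr (ih fun hX => h ⟨hX, Ne.symm hY⟩)

theorem gvar_subst (hψ : ψ.Closed) {X Y : ℕ} {φ : Frm Act} (h : φ.gvar Y) :
    (φ.subst X ψ).gvar Y := by
  induction φ with
  | tt | ff | box => trivial
  | var Z =>
    unfold subst; split_ifs
    · exact gvar_of_not_mem_fv (by simp [show ψ.fv = ∅ from hψ])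
    · exact h
  | conj n f ih => exact fun i => ih i (h i)
  | max Z φ ih =>
    unfold subst; split_ifs
    · exact h
    · exact h.imp_right ih

theorem Guarded.subst (hψc : ψ.Closed) (hψg : ψ.Guarded) {X : ℕ} {φ : Frm Act}
    (h : φ.Guarded) : (φ.subst X ψ).Guarded := by
  induction φ with
  | tt | ff => trivial
  | var Z => unfold Frm.subst; split_ifs <;> trivial
  | conj n f ih => exact fun i => ih i (h i)
  | box G k ih => exact fun a ha => ih a (h a ha)
  | max Z φ ih =>
    unfold Frm.subst; split_ifs
    · exact h
    · exact ⟨gvar_subst hψc h.1, ih h.2⟩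

theorem IsNF.subst (hψc : ψ.Closed) (hψn : ψ.IsNF) {X : ℕ} {φ : Frm Act}
    (h : φ.IsNF) : (φ.subst X ψ).IsNF := by
  induction h with
  | tt => exact .tt
  | ff => exact .ff
  | var Y =>
    unfold Frm.subst; split_ifs
    · exact hψn
    · exact .var Y
  | conj n G k hdisj _ ih => exact .conj n G _ hdisj ih
  | max Y φ hfree hφ ih =>
    unfold Frm.subst; split_ifs with hY
    · exact .max Y φ hfree hφ
    · exact .max Y _ (by simp [fv_subst hψc, hfree, hY]) ih

theorem topMax_subst_le {X : ℕ} {φ : Frm Act} (h : φ.gvar X) :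
    (φ.subst X ψ).topMax ≤ φ.topMax := by
  induction φ with
  | var Y => simp [subst, topMax, show Y ≠ X from h]
  | max Y φ ih =>
    unfold subst; split_ifs with hY
    · rfl
    · exact Nat.succ_le_succ (ih (h.resolve_left hY))
  | _ => exact le_rfl

theorem subst_eq_ff_iff (hψ : ψ ≠ .ff) (φ : Frm Act) (X : ℕ) :
    φ.subst X ψ = .ff ↔ φ = .ff := by
  cases φ <;> simp [subst] <;> split_ifs <;> simp [hψ]

structure ClosedGuardedNF (φ : Frm Act) : Prop where
  closed : φ.Closed
  nf : φ.IsNF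
  guarded : φ.Guarded

theorem ClosedGuardedNF.unfold {X : ℕ} (h : (max X ψ).ClosedGuardedNF) :
    (ψ.subst X (max X ψ)).ClosedGuardedNF := by
  obtain ⟨hc, hn, hg⟩ := h
  have hψ : ψ.IsNF := by cases hn; assumption
  exact ⟨(fv_subst hc ψ X).trans hc, IsNF.subst hc hn hψ, Guarded.subst hc hg hg.2⟩

theorem topMax_unfold_lt {X : ℕ} (h : (max X ψ).Guarded) :
    (ψ.subst X (max X ψ)).topMax < (max X ψ).topMax :=
  Nat.lt_succ_of_le (topMax_subst_le h.1)

end Frm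

theorem TStep.fix_iff {x : ℕ} {e e' : Trn Act} {l : Option Act × Option Act} :
    TStep (.fix x e) l e' ↔ TStep (e.tsubst x (.fix x e)) l e' :=
  ⟨fun | .fix h => h, .fix⟩

theorem TStep.sel_iff {n : ℕ} {f : Fin n → Trn Act} {e' : Trn Act}
    {l : Option Act × Option Act} :
    TStep (.sel n f) l e' ↔ ∃ i, TStep (f i) l e' :=
  ⟨fun | .sel i h => ⟨i, h⟩, fun ⟨i, h⟩ => .sel i h⟩

theorem tsubst_synth_zero {φ : Frm Act} (h : φ.IsNF) (s : Trn Act) :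
    (synth φ).tsubst 0 s = synth φ := by
  induction h with
  | tt | ff => rfl
  | var X => simp [synth, Trn.tsubst]
  | conj => simp [synth, Trn.tsubst]
  | max X φ _ _ ih => simp [synth, Trn.tsubst, ih]

theorem tsubst_synth {ψ : Frm Act} (hψ : ψ ≠ .ff) (φ : Frm Act) (X : ℕ) :
    (synth φ).tsubst (X + 1) (synth ψ) = synth (φ.subst X ψ) := by
  induction φ with
  | tt | ff => rfl
  | var Y => by_cases h : Y = X <;> simp [synth, Frm.subst, Trn.tsubst, h]
  | conj n f ih => simp [synth, Frm.subst, Trn.tsubst, ih]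
  | box G k ih =>
    simp only [synth, Frm.subst, Trn.tsubst, Frm.subst_eq_ff_iff hψ]
    congr 2 with (_ | a)
    · rfl
    · dsimp only; split_ifs <;> simp [Trn.tsubst, ih]
  | max Y φ ih =>
    by_cases h : Y = X
    · subst h; simp [synth, Frm.subst, Trn.tsubst]
    · simp [synth, Frm.subst, Trn.tsubst, h, ih]

theorem tstep_synth_max_iff {X : ℕ} {ψ : Frm Act} {e' : Trn Act}
    {l : Option Act × Option Act} :
    TStep (synth (.max X ψ)) l e' ↔ TStep (synth (ψ.subst X (.max X ψ))) l e' := by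
  rw [← tsubst_synth (by simp)]
  exact TStep.fix_iff

/-- The side condition of rule (iTer). -/
def Trn.Disabled (e : Trn Act) (a : Act) : Prop :=
  (∀ μ e', ¬ TStep e (some a, μ) e') ∧ ∀ μ e', ¬ TStep e (none, μ) e'

theorem disabled_synth_max_iff {X : ℕ} {ψ : Frm Act} {a : Act} :
    (synth (.max X ψ)).Disabled a ↔ (synth (ψ.subst X (.max X ψ))).Disabled a := by
  simp only [Trn.Disabled, tstep_synth_max_iff]

section ConjBox

variable {n : ℕ} {G : Fin n → Set Act} {k : Fin n → Act → Frm Act}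

theorem tstep_synth_conj_box {i : Fin n} {a : Act} (hi : a ∈ G i) (hk : (k i a).IsNF)
    (hff : k i a ≠ .ff) :
    TStep (synth (.conj n fun j => .box (G j) (k j))) (some a, some a) (synth (k i a)) := by
  refine .fix (.sel i ?_)
  simp only [synth, Trn.tsubst]
  convert TStep.prf (G := {γ | ∃ a ∈ G i, γ = some a}) (γ := some a) ⟨a, hi, rfl⟩
    using 2 <;>
    simp [hff, tsubst_synth_zero hk]

theorem TStep.synth_conj_box_input {l : Option Act × Option Act} {e' : Trn Act}
    (h : TStep (synth (.conj n fun j => .box (G j) (k j))) l e') :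
    ∃ i, ∃ a ∈ G i, l.1 = some a := by
  obtain ⟨i, hi⟩ := TStep.sel_iff.mp (TStep.fix_iff.mp h)
  simp only [synth, Trn.tsubst] at hi
  cases hi with
  | prf hγ => obtain ⟨a, ha, rfl⟩ := hγ; exact ⟨i, a, ha, rfl⟩

theorem synth_conj_box_disabled {a : Act} (ha : ∀ i, a ∉ G i) :
    (synth (.conj n fun j => .box (G j) (k j))).Disabled a := by
  refine ⟨fun μ e' h => ?_, fun μ e' h => ?_⟩ <;>
    obtain ⟨i, b, hb, hl⟩ := h.synth_conj_box_input
  · obtain rfl : a = b := by simpa using hl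
    exact ha i hb
  · simp at hl

end ConjBox

section Instrumentation

variable {L : LTS Act}

theorem TauStar.inst (e : Trn Act) {p q : L.S} (h : TauStar L p q) :
    TauStar (instLTS L) (e, p) (e, q) := by
  induction h with
  | refl => exact .refl
  | tail _ hstep ih => exact ih.tail (IStep.asy hstep)

theorem WStep.inst_of_tstep {p q : L.S} {a : Act} {e e' : Trn Act} (h : WStep L p a q)
    (he : TStep e (some a, some a) e') : WStep (instLTS L) (e, p) a (e', q) :=
  let ⟨_, _, h₁, h₂, h₃⟩ := h
  ⟨_, _, h₁.inst e, .trn h₂ he, h₃.inst e'⟩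

theorem WStep.inst_of_disabled {p q : L.S} {a : Act} {e : Trn Act} (h : WStep L p a q)
    (he : e.Disabled a) : WStep (instLTS L) (e, p) a (.id, q) :=
  let ⟨_, _, h₁, h₂, h₃⟩ := h
  ⟨_, _, h₁.inst e, .ter h₂ he.1 he.2, h₃.inst .id⟩

theorem WTrace.inst_id {p q : L.S} {t : List Act} (h : WTrace L p t q) :
    WTrace (instLTS L) (.id, p) t (.id, q) := by
  induction h with
  | nil h => exact .nil (h.inst _)
  | cons h _ ih => exact .cons (h.inst_of_tstep (.id _)) ih

theorem synth_step_or_disabled {φ : Frm Act} (hφ : φ.ClosedGuardedNF) {p r : L.S} {a : Act}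
    (hW : WStep L p a r) (h₀ : ¬ Viol L p [] φ) (h₁ : ¬ Viol L p [a] φ) :
    (∃ φa : Frm Act, φa.ClosedGuardedNF ∧ TStep (synth φ) (some a, some a) (synth φa) ∧
        ∀ t, Viol L r t φa → Viol L p (a :: t) φ) ∨
      (synth φ).Disabled a := by
  induction hm : φ.topMax using Nat.strong_induction_on generalizing φ with
  | _ m ih =>
  cases hφ.nf with
  | tt => exact .inl ⟨.tt, ⟨rfl, .tt, trivial⟩, .id a, fun _ hv => by cases hv⟩
  | ff => exact absurd (.ff p) h₀
  | var X => exact absurd (show (Frm.var X).fv = ∅ from hφ.closed) (by simp [Frm.fv])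
  | conj n G k _ hk =>
    by_cases ha : ∃ i, a ∈ G i
    · obtain ⟨i, hi⟩ := ha
      have hff : k i a ≠ .ff := fun hff => h₁ (.conj i (.box hi hW (hff ▸ .ff r)))
      have hclosed : (k i a).Closed := by
        have := hφ.closed; simp only [Frm.Closed, Frm.fv, Set.iUnion_eq_empty] at this
        exact this i a hi
      exact .inl ⟨k i a, ⟨hclosed, hk i a hi, hφ.guarded i a hi⟩,
        tstep_synth_conj_box hi (hk i a hi) hff, fun t hv => .conj i (.box hi hW hv)⟩
    · exact .inr (synth_conj_box_disabled (not_exists.mp ha))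
  | max X ψ _ _ =>
    have hlt := hm ▸ Frm.topMax_unfold_lt hφ.guarded
    rcases ih _ hlt hφ.unfold (h₀ ∘ .max) (h₁ ∘ .max) rfl with
      ⟨φa, hφa, hstep, hviol⟩ | hdis
    · exact .inl ⟨φa, hφa, tstep_synth_max_iff.mpr hstep, fun t hv => .max (hviol t hv)⟩
    · exact .inr (disabled_synth_max_iff.mpr hdis)

end Instrumentation

/-- non-violating trace transparency, forward direction: if no
prefix of t (including t itself) is a violating trace of p w.r.t. the closed
guarded SHMLnf formula φ, and p =t=> p', then ⟦φ⟧e[p] =t=> e'[p'] for some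
transducer e'. -/
theorem nonviolating_transparency_fwd (Act : Type) (L : LTS Act) (φ : Frm Act)
    (hclosed : φ.Closed) (hnf : φ.IsNF) (hguard : φ.Guarded)
    (p p' : L.S) (t : List Act)
    (hnv : ∀ t' : List Act, t' <+: t → ¬ Viol L p t' φ)
    (htr : WTrace L p t p') :
    ∃ e' : Trn Act, WTrace (instLTS L) (synth φ, p) t (e', p') := by
  have hφ : φ.ClosedGuardedNF := ⟨hclosed, hnf, hguard⟩
  clear hclosed hnf hguard
  induction htr generalizing φ with
  | nil h => exact ⟨synth φ, .nil (h.inst _)⟩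
  | @cons p r q a t hW htr ih =>
    rcases synth_step_or_disabled hφ hW (hnv [] List.nil_prefix) (hnv [a] (by simp)) with
      ⟨φa, hφa, hstep, hviol⟩ | hdis
    · have hnv' : ∀ t' : List Act, t' <+: t → ¬ Viol L r t' φa := fun t' ht' hv =>
        hnv (a :: t') (List.cons_prefix_cons.mpr ⟨rfl, ht'⟩) (hviol t' hv)
      obtain ⟨e', he'⟩ := ih φa hnv' hφa
      exact ⟨e', .cons (hW.inst_of_tstep hstep) he'⟩
    · exact ⟨.id, .cons (hW.inst_of_disabled hdis) htr.inst_id⟩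

end Enf
end
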